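/- Let G be an r-regular finite simple graph with n ≥ 2 vertices and m edges. Then, as real numbers, NK(G^{--}) = (n-2)^m · (n+m-1-2r)^n. -/

import Mathlib

/-!
In `G^{--}` a vertex `u` is adjacent to the `n - 1 - deg u` vertices it is not adjacent to in `G`
and to the `m - deg u` edges not incident with it, while an edge is adjacent exactly to the `n - 2`
vertices off it. For an `r`-regular graph every vertex factor of the Narumi–Katayama index is thus
`n + m - 1 - 2r` and every edge factor is `n - 2`.
-/

open Finset

variable {V : Type*}

/-- The Narumi–Katayama index: the product of the degrees of all vertices. -/
def NK {W : Type*} [Fintype W] (H : SimpleGraph W) [DecidableRel H.Adj] : ℕ :=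
  ∏ v, H.degree v

/-- The first Zagreb index: the sum of the squares of the degrees. -/
def M1 [Fintype V] (G : SimpleGraph V) [DecidableRel G.Adj] : ℕ :=
  ∑ v, (G.degree v) ^ 2

/-- The multiplicative sum Zagreb index: the product over the edges of `G` of the
sum of the degrees of the two endpoints. -/
def Pi1Star [Fintype V] [DecidableEq V] (G : SimpleGraph V) [DecidableRel G.Adj] : ℕ :=
  ∏ e ∈ G.edgeFinset,
    Sym2.lift ⟨fun u v => G.degree u + G.degree v, fun u v => by simp [Nat.add_comm]⟩ e

/-- A generic transformation graph on the vertex set `V(G) ∪ E(G)`, built from a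
symmetric irreflexive relation `Rvv` between vertices, a symmetric irreflexive relation
`Ree` between edges, and an incidence relation `Rve` between vertices and edges. -/
def transGraph (G : SimpleGraph V) (Rvv : V → V → Prop) (Ree : Sym2 V → Sym2 V → Prop)
    (Rve : V → Sym2 V → Prop)
    (hvv : Symmetric Rvv) (hvv' : Irreflexive Rvv)
    (hee : Symmetric Ree) (hee' : Irreflexive Ree) :
    SimpleGraph (V ⊕ G.edgeSet) where
  Adj a b :=
    match a, b with
    | Sum.inl u, Sum.inl v => Rvv u v
    | Sum.inr e, Sum.inr f => Ree e.1 f.1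
    | Sum.inl u, Sum.inr e => Rve u e.1
    | Sum.inr e, Sum.inl u => Rve u e.1
  symm := ⟨by
    rintro (u | e) (v | f) h
    · exact hvv h
    · exact h
    · exact h
    · exact hee h⟩
  loopless := ⟨by
    rintro (u | e) h
    · exact hvv' u h
    · exact hee' e.1 h⟩

instance transGraph.instDecidableAdj (G : SimpleGraph V) (Rvv : V → V → Prop)
    (Ree : Sym2 V → Sym2 V → Prop) (Rve : V → Sym2 V → Prop)
    (h1 : Symmetric Rvv) (h2 : Irreflexive Rvv) (h3 : Symmetric Ree) (h4 : Irreflexive Ree)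
    [DecidableRel Rvv] [DecidableRel Ree] [∀ u e, Decidable (Rve u e)] :
    DecidableRel (transGraph G Rvv Ree Rve h1 h2 h3 h4).Adj := fun a b =>
  match a, b with
  | Sum.inl u, Sum.inl v => inferInstanceAs (Decidable (Rvv u v))
  | Sum.inr e, Sum.inr f => inferInstanceAs (Decidable (Ree e.1 f.1))
  | Sum.inl u, Sum.inr e => inferInstanceAs (Decidable (Rve u e.1))
  | Sum.inr e, Sum.inl u => inferInstanceAs (Decidable (Rve u e.1))

/-- Two edges (as elements of `Sym2 V`) are adjacent: distinct and sharing an endpoint. -/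
abbrev shareRel : Sym2 V → Sym2 V → Prop := fun e f => e ≠ f ∧ ∃ w, w ∈ e ∧ w ∈ f

lemma shareRel_symm : Symmetric (shareRel (V := V)) :=
  fun _ _ h => ⟨h.1.symm, h.2.imp fun _ hw => ⟨hw.2, hw.1⟩⟩

lemma shareRel_irrefl : Irreflexive (shareRel (V := V)) := fun _ h => h.1 rfl

/-- Two edges are "non-adjacent": distinct and sharing no endpoint. -/
abbrev coshareRel : Sym2 V → Sym2 V → Prop := fun e f => e ≠ f ∧ ∀ w, w ∈ e → w ∉ f

lemma coshareRel_symm : Symmetric (coshareRel (V := V)) :=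
  fun _ _ h => ⟨h.1.symm, fun w hf he => h.2 w he hf⟩

lemma coshareRel_irrefl : Irreflexive (coshareRel (V := V)) := fun _ h => h.1 rfl

/-- Non-adjacency of distinct vertices. -/
abbrev coAdj (G : SimpleGraph V) : V → V → Prop := fun u v => u ≠ v ∧ ¬ G.Adj u v

lemma coAdj_symm (G : SimpleGraph V) : Symmetric (coAdj G) :=
  fun _ _ h => ⟨h.1.symm, fun ha => h.2 ha.symm⟩

lemma coAdj_irrefl (G : SimpleGraph V) : Irreflexive (coAdj G) := fun _ h => h.1 rfl

variable [Fintype V] [DecidableEq V]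

/-- The transformation graph `G^{--}`. -/
abbrev Gmm (G : SimpleGraph V) [DecidableRel G.Adj] : SimpleGraph (V ⊕ G.edgeSet) :=
  transGraph G (coAdj G) (fun _ _ => False) (fun u e => u ∉ e)
    (coAdj_symm G) (coAdj_irrefl G) (fun _ _ h => h.elim) (fun _ h => h)

instance Gmm.instDecidableAdj (G : SimpleGraph V) [DecidableRel G.Adj] : DecidableRel (Gmm G).Adj :=
  fun a b => transGraph.instDecidableAdj G _ _ _ _ _ _ _ a b

namespace SimpleGraph

lemma degree_eq_card_adj_inl_add_card_adj_inr {α β : Type*} [Fintype α] [Fintype β]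
    (H : SimpleGraph (α ⊕ β)) [DecidableRel H.Adj] (x : α ⊕ β) :
    H.degree x = #{a | H.Adj x (.inl a)} + #{b | H.Adj x (.inr b)} := by
  simp only [← card_neighborFinset_eq_degree, neighborFinset_eq_filter, card_filter,
    Fintype.sum_sum_type]

variable (G : SimpleGraph V) [DecidableRel G.Adj]

lemma degree_compl_add_degree_add_one (u : V) : Gᶜ.degree u + G.degree u + 1 = Fintype.card V := by
  have := G.degree_lt_card_verts u
  rw [degree_compl]
  omega

lemma card_edgeSet_notMem_add_degree (u : V) :
    #{e : G.edgeSet | u ∉ (e : Sym2 V)} + G.degree u = #G.edgeFinset := by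
  have hinc : #{e : G.edgeSet | u ∈ (e : Sym2 V)} = G.degree u := by
    rw [← Fintype.card_subtype, ← card_incidenceSet_eq_degree]
    exact Fintype.card_congr (Equiv.subtypeSubtypeEquivSubtypeInter _ (u ∈ ·))
  rw [← hinc, add_comm, card_filter_add_card_filter_not, card_univ, edgeFinset_card]

omit [DecidableRel G.Adj] in
lemma card_notMem_add_two {e : Sym2 V} (he : e ∈ G.edgeSet) :
    #{v | v ∉ e} + 2 = Fintype.card V := by
  have hmem : #{v | v ∈ e} = 2 := by
    rw [← Sym2.card_toFinset_of_not_isDiag e (G.not_isDiag_of_mem_edgeSet he)]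
    congr 1
    ext v
    simp
  rw [← hmem, add_comm, card_filter_add_card_filter_not, card_univ]

end SimpleGraph

section

open SimpleGraph

variable {R : Type*} (G : SimpleGraph V) [DecidableRel G.Adj]

omit [Fintype V] [DecidableEq V] in
@[simp] lemma Gmm_adj_inl_inl {u v : V} : (Gmm G).Adj (.inl u) (.inl v) ↔ Gᶜ.Adj u v :=
  Iff.rfl

omit [Fintype V] [DecidableEq V] in
@[simp] lemma Gmm_adj_inl_inr {u : V} {e : G.edgeSet} : (Gmm G).Adj (.inl u) (.inr e) ↔ u ∉ e.1 :=
  Iff.rfl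

omit [Fintype V] [DecidableEq V] in
@[simp] lemma Gmm_adj_inr_inl {e : G.edgeSet} {u : V} : (Gmm G).Adj (.inr e) (.inl u) ↔ u ∉ e.1 :=
  Iff.rfl

omit [Fintype V] [DecidableEq V] in
@[simp] lemma not_Gmm_adj_inr_inr {e f : G.edgeSet} : ¬(Gmm G).Adj (.inr e) (.inr f) :=
  id

-- Stated additively to avoid truncated subtraction in `ℕ`.
lemma Gmm_degree_inl_add (u : V) :
    (Gmm G).degree (.inl u) + 2 * G.degree u + 1 = Fintype.card V + #G.edgeFinset := by
  have hvert := G.degree_compl_add_degree_add_one u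
  have hedge := G.card_edgeSet_notMem_add_degree u
  rw [← Gᶜ.card_neighborFinset_eq_degree, neighborFinset_eq_filter] at hvert
  rw [degree_eq_card_adj_inl_add_card_adj_inr]
  simp only [Gmm_adj_inl_inl, Gmm_adj_inl_inr]
  omega

lemma Gmm_degree_inr_add (e : G.edgeSet) : (Gmm G).degree (.inr e) + 2 = Fintype.card V := by
  rw [degree_eq_card_adj_inl_add_card_adj_inr, ← G.card_notMem_add_two e.2]
  simp only [Gmm_adj_inr_inl, not_Gmm_adj_inr_inr, filter_false, card_empty, add_zero]

lemma Gmm_degree_inl [CommRing R] (u : V) :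
    ((Gmm G).degree (.inl u) : R) = Fintype.card V + #G.edgeFinset - 1 - 2 * G.degree u := by
  have h : ((_ + 2 * G.degree u + 1 : ℕ) : R) = _ := congrArg Nat.cast (Gmm_degree_inl_add G u)
  push_cast at h
  linear_combination h

lemma Gmm_degree_inr [CommRing R] (e : G.edgeSet) :
    ((Gmm G).degree (.inr e) : R) = Fintype.card V - 2 := by
  have h : ((_ + 2 : ℕ) : R) = _ := congrArg Nat.cast (Gmm_degree_inr_add G e)
  push_cast at h
  linear_combination h

lemma NK_Gmm [CommRing R] :
    (NK (Gmm G) : R) = (∏ u, ((Fintype.card V : R) + #G.edgeFinset - 1 - 2 * G.degree u))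
      * ((Fintype.card V : R) - 2) ^ #G.edgeFinset := by
  rw [NK, Fintype.prod_sum_type, Nat.cast_mul, Nat.cast_prod, Nat.cast_prod]
  simp only [Gmm_degree_inl, Gmm_degree_inr, prod_const, card_univ, edgeFinset_card]

end

theorem stmt_5_general (G : SimpleGraph V) [DecidableRel G.Adj]
    (r : ℕ)
    (hreg : G.IsRegularOfDegree r) :
    (NK (Gmm G) : ℝ) = ((Fintype.card V : ℝ) - 2) ^ G.edgeFinset.card * ((Fintype.card V : ℝ) + G.edgeFinset.card - 1 - 2 * r) ^ Fintype.card V := by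
  rw [NK_Gmm, mul_comm]
  simp only [hreg _, prod_const, card_univ]

theorem stmt_5 (G : SimpleGraph V) [DecidableRel G.Adj]
    (hn : 2 ≤ Fintype.card V)
    (r : ℕ)
    (hreg : G.IsRegularOfDegree r) :
    (NK (Gmm G) : ℝ) = ((Fintype.card V : ℝ) - 2) ^ G.edgeFinset.card * ((Fintype.card V : ℝ) + G.edgeFinset.card - 1 - 2 * r) ^ Fintype.card V :=
  stmt_5_general G r hreg
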